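/- Let g: ℝⁿ → ℝ ∪ {∞} be proper, closed and convex and ρ > 0. Define r_{γg}(x) = γg(x) + ½‖x‖² and p²_{γg}(x) = 2 r*_{γg}(x) - ½‖x‖². Then p²_{ρ(g*∘(-Id))}(y) = -ρ² p²_{ρ⁻¹g}(-ρ⁻¹y) for all y ∈ ℝⁿ. -/

import Mathlib

open scoped RealInnerProductSpace

/-- Fenchel conjugate of an extended-real-valued function. -/
noncomputable def econj {n : ℕ} (g : EuclideanSpace ℝ (Fin n) → EReal)
    (y : EuclideanSpace ℝ (Fin n)) : EReal :=
  ⨆ x, ((⟪y, x⟫ : ℝ) : EReal) - g x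

/-- `g` is proper: somewhere finite and never `-∞`. -/
def EProper {n : ℕ} (g : EuclideanSpace ℝ (Fin n) → EReal) : Prop :=
  (∃ x, g x ≠ ⊤) ∧ ∀ x, g x ≠ ⊥

/-- Convexity for extended-real-valued functions. -/
def EConvex {n : ℕ} (g : EuclideanSpace ℝ (Fin n) → EReal) : Prop :=
  ∀ x y : EuclideanSpace ℝ (Fin n), ∀ a b : ℝ, 0 ≤ a → 0 ≤ b → a + b = 1 →
    g (a • x + b • y) ≤ (a : EReal) * g x + (b : EReal) * g y

/-- `p` is the proximal point `prox_{γ g}(z)`, i.e. it minimizes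
`g(·) + ‖· - z‖²/(2γ)`. -/
def IsProx {n : ℕ} (g : EuclideanSpace ℝ (Fin n) → EReal) (γ : ℝ)
    (z p : EuclideanSpace ℝ (Fin n)) : Prop :=
  ∀ y, g p + ((‖p - z‖^2 / (2*γ) : ℝ) : EReal) ≤ g y + ((‖y - z‖^2 / (2*γ) : ℝ) : EReal)

/-- `r_{γg}(x) = γ g(x) + ½‖x‖²`. -/
noncomputable def rfun {n : ℕ} (g : EuclideanSpace ℝ (Fin n) → EReal) (γ : ℝ)
    (x : EuclideanSpace ℝ (Fin n)) : EReal :=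
  (γ : EReal) * g x + ((‖x‖^2 / 2 : ℝ) : EReal)

/-- `p²_{γg}(x) = 2 r*_{γg}(x) - ½‖x‖²`. -/
noncomputable def p2fun {n : ℕ} (g : EuclideanSpace ℝ (Fin n) → EReal) (γ : ℝ)
    (x : EuclideanSpace ℝ (Fin n)) : EReal :=
  (2 : EReal) * econj (rfun g γ) x - ((‖x‖^2 / 2 : ℝ) : EReal)

/-!
Put `z = -ρ⁻¹ y` and let `p` minimize `g + (ρ/2)‖· - z‖²`; it exists because a proper closed convex
function decays at most linearly, so this objective is coercive. The optimality of `p` says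
`ρ (z - p) ∈ ∂g(p)`, so Fenchel–Young holds with equality there, and this in turn makes `ρ (p - z)`
the proximal point of `ρ (g* ∘ (-Id))` at `y` (Moreau's decomposition). Each conjugate `r*_{γh}(x)`
is a Moreau envelope, `½‖x‖² - γ h(q) - ½‖q - x‖²` with `q = prox_{γh}(x)`, so both sides of the
identity are explicit in `p`, `g(p)`, `z` and `ρ`, and they agree.
-/

open Filter Metric Topology

theorem LowerSemicontinuous.exists_forall_le_of_forall_dist_gt {α β : Type*}
    [PseudoMetricSpace α] [ProperSpace α] [LinearOrder β] {f : α → β}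
    (hf : LowerSemicontinuous f) (x₀ z : α) {R : ℝ}
    (h : ∀ u, R < dist u z → f x₀ ≤ f u) : ∃ p, ∀ u, f p ≤ f u := by
  set r := max R (dist x₀ z)
  obtain ⟨p, -, hp⟩ := (hf.lowerSemicontinuousOn _).exists_isMinOn
    ⟨x₀, mem_closedBall.2 (le_max_right R _)⟩ (isCompact_closedBall z r)
  refine ⟨p, fun u => ?_⟩
  by_cases hu : dist u z ≤ r
  · exact hp (mem_closedBall.2 hu)
  · exact (hp (mem_closedBall.2 (le_max_right _ _))).trans
      (h u ((le_max_left _ _).trans_lt (not_le.1 hu)))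

section

variable {n : ℕ} {g : EuclideanSpace ℝ (Fin n) → EReal} {γ : ℝ} {z p : EuclideanSpace ℝ (Fin n)}

theorem EConvex.apply_add_smul_sub_le (hgc : EConvex g) {x y : EuclideanSpace ℝ (Fin n)}
    {a b t : ℝ} (hx : g x = a) (hy : g y = b) (ht₀ : 0 ≤ t) (ht₁ : t ≤ 1) :
    g (x + t • (y - x)) ≤ ((1 - t) * a + t * b : ℝ) := by
  have h := hgc x y (1 - t) t (by linarith) ht₀ (by ring)
  rw [hx, hy] at h
  convert h using 2
  · rw [smul_sub, sub_smul, one_smul]; abel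
  · push_cast; rfl

theorem EConvex.linear_lower_bound_of_le_on_closedBall (hgc : EConvex g) (hb : ∀ x, g x ≠ ⊥)
    {x₀ : EuclideanSpace ℝ (Fin n)} {c₀ m : ℝ} (hx₀ : g x₀ = c₀)
    (hm : ∀ v ∈ closedBall x₀ 1, (m : EReal) ≤ g v) (u : EuclideanSpace ℝ (Fin n)) :
    ((m - (c₀ - m) * ‖u - x₀‖ : ℝ) : EReal) ≤ g u := by
  rcases eq_or_ne (g u) ⊤ with hu | hu
  · simp [hu]
  lift g u to ℝ using ⟨hu, hb u⟩ with a ha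
  have hmc₀ : m ≤ c₀ := by exact_mod_cast hx₀ ▸ hm x₀ (mem_closedBall_self zero_le_one)
  rw [EReal.coe_le_coe_iff]
  set d := ‖u - x₀‖
  rcases le_or_gt d 1 with hd | hd
  · have : m ≤ a := by exact_mod_cast ha ▸ hm u (by rwa [mem_closedBall, dist_eq_norm])
    nlinarith [norm_nonneg (u - x₀)]
  have hv : x₀ + d⁻¹ • (u - x₀) ∈ closedBall x₀ 1 := by
    rw [mem_closedBall, dist_eq_norm, add_sub_cancel_left, norm_smul, Real.norm_eq_abs,
      abs_inv, abs_of_pos (by linarith), inv_mul_cancel₀ (by linarith)]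
  have h := (hm _ hv).trans
    (hgc.apply_add_smul_sub_le hx₀ ha.symm (by positivity) (inv_le_one_of_one_le₀ hd.le))
  rw [EReal.coe_le_coe_iff] at h
  have : d * m ≤ (d - 1) * c₀ + a := by
    calc d * m ≤ d * ((1 - d⁻¹) * c₀ + d⁻¹ * a) := by gcongr
      _ = (d - 1) * c₀ + a := by field_simp
  nlinarith

theorem EConvex.exists_linear_lower_bound (hgp : EProper g) (hglsc : LowerSemicontinuous g)
    (hgc : EConvex g) : ∃ a b : ℝ, 0 ≤ b ∧ ∀ u, ((a - b * ‖u‖ : ℝ) : EReal) ≤ g u := by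
  obtain ⟨⟨x₀, hx₀⟩, hb⟩ := hgp
  lift g x₀ to ℝ using ⟨hx₀, hb x₀⟩ with c₀ hc₀
  obtain ⟨v, -, hv⟩ := (hglsc.lowerSemicontinuousOn _).exists_isMinOn
    ⟨x₀, mem_closedBall_self zero_le_one⟩ (isCompact_closedBall x₀ 1)
  have hvx₀ : g v ≤ c₀ := hc₀ ▸ hv (mem_closedBall_self zero_le_one)
  lift g v to ℝ using ⟨ne_top_of_le_ne_top (EReal.coe_ne_top c₀) hvx₀, hb v⟩ with m hm
  have hmc₀ : m ≤ c₀ := by exact_mod_cast hvx₀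
  refine ⟨m - (c₀ - m) * ‖x₀‖, c₀ - m, sub_nonneg.2 hmc₀, fun u => ?_⟩
  refine le_trans ?_ (hgc.linear_lower_bound_of_le_on_closedBall hb hc₀.symm (fun w hw => hm ▸ hv hw) u)
  have : ‖u - x₀‖ ≤ ‖u‖ + ‖x₀‖ := norm_sub_le u x₀
  exact_mod_cast (by nlinarith : m - (c₀ - m) * ‖x₀‖ - (c₀ - m) * ‖u‖ ≤ m - (c₀ - m) * ‖u - x₀‖)

theorem exists_isProx (hgp : EProper g) (hglsc : LowerSemicontinuous g) (hgc : EConvex g)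
    (hγ : 0 < γ) (z : EuclideanSpace ℝ (Fin n)) : ∃ p, IsProx g γ z p := by
  obtain ⟨a, b, hb, hab⟩ := hgc.exists_linear_lower_bound hgp hglsc
  obtain ⟨x₀, hx₀⟩ := hgp.1
  lift g x₀ to ℝ using ⟨hx₀, hgp.2 x₀⟩ with c₀ hc₀
  have hlsc : LowerSemicontinuous fun u => g u + ((‖u - z‖^2 / (2*γ) : ℝ) : EReal) :=
    hglsc.add' (EReal.continuous_coe_iff.2 (by fun_prop)).lowerSemicontinuous
      fun u => EReal.continuousAt_add (Or.inr (EReal.coe_ne_bot _)) (Or.inr (EReal.coe_ne_top _))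
  -- for `t = ‖u - z‖` with `t² > K`, the bound `b t ≤ t²/(4γ) + γ b²` leaves a margin `t²/(4γ)`
  -- that beats the value at `x₀`
  set K := 4 * γ * (c₀ + ‖x₀ - z‖^2 / (2*γ) - a + b * ‖z‖ + γ * b^2)
  refine hlsc.exists_forall_le_of_forall_dist_gt x₀ z (R := max 1 K) fun u hu => ?_
  rw [dist_eq_norm] at hu
  rw [← hc₀]
  refine le_trans ?_ (add_le_add_left (hab u) _)
  rw [← EReal.coe_add, ← EReal.coe_add, EReal.coe_le_coe_iff]
  set t := ‖u - z‖
  have ht : 1 < t ∧ K < t := max_lt_iff.1 hu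
  have hnorm : ‖u‖ ≤ t + ‖z‖ := by simpa using norm_add_le (u - z) z
  have hK : K < t^2 := by nlinarith
  have hhalves : t^2 / (2*γ) = t^2 / (4*γ) + t^2 / (4*γ) := by field_simp; ring
  have hmargin : K / (4*γ) < t^2 / (4*γ) := div_lt_div_of_pos_right hK (by positivity)
  have hKval : K / (4*γ) = c₀ + ‖x₀ - z‖^2 / (2*γ) - a + b * ‖z‖ + γ * b^2 := by
    simp only [K]; field_simp
  have hamgm : b * t ≤ t^2 / (4*γ) + γ * b^2 := by
    rw [div_add' _ _ _ (by positivity), le_div_iff₀ (by positivity)]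
    nlinarith [sq_nonneg (t - 2 * γ * b)]
  nlinarith

theorem IsProx.ne_top (hgp : EProper g) (hp : IsProx g γ z p) : g p ≠ ⊤ := by
  obtain ⟨x₀, hx₀⟩ := hgp.1
  lift g x₀ to ℝ using ⟨hx₀, hgp.2 x₀⟩ with c₀ hc₀
  have h := hp x₀
  rw [← hc₀, ← EReal.coe_add] at h
  intro hp
  rw [hp, EReal.top_add_coe, top_le_iff] at h
  exact EReal.coe_ne_top _ h

theorem IsProx.le_of_eq_coe (hp : IsProx g γ z p) {u : EuclideanSpace ℝ (Fin n)} {gp a : ℝ}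
    (hgp : g p = gp) (ha : g u = a) :
    gp + ‖p - z‖^2 / (2*γ) ≤ a + ‖u - z‖^2 / (2*γ) := by
  have h := hp u
  rw [hgp, ha] at h
  exact_mod_cast h

theorem IsProx.subgradient (hp : IsProx g γ z p) (hgc : EConvex g) (hb : ∀ x, g x ≠ ⊥)
    {gp : ℝ} (hgp : g p = gp) (u : EuclideanSpace ℝ (Fin n)) :
    ((gp + ⟪γ⁻¹ • (z - p), u - p⟫ : ℝ) : EReal) ≤ g u := by
  rcases eq_or_ne (g u) ⊤ with hu | hu
  · simp [hu]
  lift g u to ℝ using ⟨hu, hb u⟩ with a ha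
  rw [EReal.coe_le_coe_iff]
  set d := u - p
  -- minimality of `p` against `p + t • d`, divided by `t`; then let `t → 0⁺`
  have key : ∀ t ∈ Set.Ioc (0 : ℝ) 1, gp + ⟪γ⁻¹ • (z - p), d⟫ ≤ a + t * (‖d‖^2 / (2*γ)) := by
    rintro t ⟨ht₀, ht₁⟩
    have hconv : g (p + t • d) ≤ _ := hgc.apply_add_smul_sub_le hgp ha.symm ht₀.le ht₁
    lift g (p + t • d) to ℝ using ⟨ne_top_of_le_ne_top (EReal.coe_ne_top _) hconv, hb _⟩
      with c hc
    have hmin := hp.le_of_eq_coe hgp hc.symm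
    rw [EReal.coe_le_coe_iff] at hconv
    have hexp : ‖p + t • d - z‖^2 = ‖p - z‖^2 + 2 * t * ⟪p - z, d⟫ + t^2 * ‖d‖^2 := by
      rw [add_sub_right_comm, norm_add_sq_real, inner_smul_right, norm_smul, mul_pow,
        Real.norm_eq_abs, sq_abs]
      ring
    have hinner : ⟪γ⁻¹ • (z - p), d⟫ = -(⟪p - z, d⟫ / γ) := by
      rw [real_inner_smul_left, ← neg_sub p z, inner_neg_left]; ring
    rw [hexp, add_div, add_div] at hmin
    rw [hinner]
    have : t * (gp - ⟪p - z, d⟫ / γ) ≤ t * (a + t * (‖d‖^2 / (2*γ))) := by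
      have e1 : 2 * t * ⟪p - z, d⟫ / (2*γ) = t * (⟪p - z, d⟫ / γ) := by ring
      have e2 : t^2 * ‖d‖^2 / (2*γ) = t * (t * (‖d‖^2 / (2*γ))) := by ring
      rw [e1, e2] at hmin
      linarith
    linarith [le_of_mul_le_mul_left this ht₀]
  have hlim : Tendsto (fun t : ℝ => a + t * (‖d‖^2 / (2*γ))) (𝓝[>] 0) (𝓝 a) := by
    have : Tendsto (fun t : ℝ => a + t * (‖d‖^2 / (2*γ))) (𝓝 0) (𝓝 (a + 0 * (‖d‖^2 / (2*γ)))) :=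
      (continuous_const.add (continuous_id.mul continuous_const)).tendsto 0
    simpa using this.mono_left nhdsWithin_le_nhds
  exact ge_of_tendsto hlim (eventually_of_mem (Ioc_mem_nhdsGT one_pos) key)

theorem coe_inner_sub_le_econj (w x : EuclideanSpace ℝ (Fin n)) :
    ((⟪w, x⟫ : ℝ) : EReal) - g x ≤ econj g w :=
  le_iSup (fun x => ((⟪w, x⟫ : ℝ) : EReal) - g x) x

theorem econj_ne_bot (hgp : EProper g) (w : EuclideanSpace ℝ (Fin n)) : econj g w ≠ ⊥ := by
  obtain ⟨x₀, hx₀⟩ := hgp.1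
  lift g x₀ to ℝ using ⟨hx₀, hgp.2 x₀⟩ with c₀ hc₀
  have h := coe_inner_sub_le_econj (g := g) w x₀
  rw [← hc₀, ← EReal.coe_sub] at h
  exact ne_bot_of_le_ne_bot (EReal.coe_ne_bot _) h

theorem econj_eq_of_subgradient {w : EuclideanSpace ℝ (Fin n)} {gp : ℝ} (hgp : g p = gp)
    (hsub : ∀ u, ((gp + ⟪w, u - p⟫ : ℝ) : EReal) ≤ g u) :
    econj g w = ((⟪w, p⟫ - gp : ℝ) : EReal) := by
  refine le_antisymm (iSup_le fun u => ?_) ?_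
  · calc ((⟪w, u⟫ : ℝ) : EReal) - g u
        ≤ ((⟪w, u⟫ : ℝ) : EReal) - ((gp + ⟪w, u - p⟫ : ℝ) : EReal) :=
          EReal.sub_le_sub le_rfl (hsub u)
      _ = ((⟪w, p⟫ - gp : ℝ) : EReal) := by
          rw [← EReal.coe_sub, EReal.coe_eq_coe_iff, inner_sub_right]; ring
  · simpa [hgp, ← EReal.coe_sub] using coe_inner_sub_le_econj (g := g) w p

theorem econj_rfun_eq_of_isProx (hb : ∀ x, g x ≠ ⊥) (hγ : 0 < γ) (hp : IsProx g γ z p) {gp : ℝ}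
    (hgp : g p = gp) :
    econj (rfun g γ) z = ((‖z‖^2 / 2 - γ * gp - ‖p - z‖^2 / 2 : ℝ) : EReal) := by
  refine le_antisymm (iSup_le fun u => ?_) (le_iSup_of_le p ?_)
  · rcases eq_or_ne (g u) ⊤ with hu | hu
    · simp [rfun, hu, EReal.coe_mul_top_of_pos hγ]
    lift g u to ℝ using ⟨hu, hb u⟩ with a ha
    simp only [rfun, ← ha, ← EReal.coe_mul, ← EReal.coe_add, ← EReal.coe_sub,
      EReal.coe_le_coe_iff]
    have h := mul_le_mul_of_nonneg_left (hp.le_of_eq_coe hgp ha.symm) hγ.le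
    have hhalf : ∀ r : ℝ, γ * (r / (2*γ)) = r / 2 := fun r => by field_simp
    rw [mul_add, mul_add, hhalf, hhalf, norm_sub_sq_real u z, real_inner_comm z u] at h
    linarith
  · simp only [rfun, hgp, ← EReal.coe_mul, ← EReal.coe_add, ← EReal.coe_sub,
      EReal.coe_le_coe_iff]
    rw [norm_sub_sq_real, real_inner_comm]
    linarith

theorem IsProx.econj_neg_smul_sub_eq (hp : IsProx g γ⁻¹ z p) (hgc : EConvex g)
    (hb : ∀ x, g x ≠ ⊥) {gp : ℝ} (hgp : g p = gp) :
    econj g (-(γ • (p - z))) = ((⟪γ • (z - p), p⟫ - gp : ℝ) : EReal) := by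
  rw [← smul_neg, neg_sub]
  exact econj_eq_of_subgradient hgp (by simpa only [inv_inv] using hp.subgradient hgc hb hgp)

theorem IsProx.isProx_econj_neg (hp : IsProx g γ⁻¹ z p) (hgc : EConvex g) (hb : ∀ x, g x ≠ ⊥)
    (hγ : 0 < γ) {gp : ℝ} (hgp : g p = gp) :
    IsProx (fun μ => econj g (-μ)) γ (-(γ • z)) (γ • (p - z)) := by
  intro x
  have hlow : ((⟪-x, p⟫ - gp : ℝ) : EReal) ≤ econj g (-x) := by
    have h := coe_inner_sub_le_econj (g := g) (-x) p
    rwa [hgp, ← EReal.coe_sub] at h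
  simp only [hp.econj_neg_smul_sub_eq hgc hb hgp]
  refine le_trans ?_ (add_le_add_left hlow _)
  rw [← EReal.coe_add, ← EReal.coe_add, EReal.coe_le_coe_iff, sub_neg_eq_add, sub_neg_eq_add,
    ← smul_add, sub_add_cancel]
  have hgap : ⟪-x, p⟫ - gp + ‖x + γ • z‖^2 / (2*γ) - (⟪γ • (z - p), p⟫ - gp + ‖γ • p‖^2 / (2*γ))
      = ‖x + γ • (z - p)‖^2 / (2*γ) := by
    simp only [norm_add_sq_real, norm_smul, inner_smul_right, real_inner_smul_left, inner_sub_left,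
      inner_sub_right, inner_neg_left, mul_pow, Real.norm_eq_abs, sq_abs, norm_sub_sq_real,
      real_inner_comm p x, real_inner_comm p z, real_inner_self_eq_norm_sq]
    field_simp
    ring
  have : 0 ≤ ‖x + γ • (z - p)‖^2 / (2*γ) := by positivity
  linarith

end

theorem stmt12 {n : ℕ} (g : EuclideanSpace ℝ (Fin n) → EReal)
    (hgp : EProper g) (hglsc : LowerSemicontinuous g) (hgc : EConvex g)
    (ρ : ℝ) (hρ : 0 < ρ) :
    ∀ y, p2fun (fun μ => econj g (-μ)) ρ y =
      -(((ρ^2 : ℝ) : EReal) * p2fun g ρ⁻¹ (-(ρ⁻¹ • y))) := by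
  intro y
  obtain ⟨z, rfl⟩ : ∃ z, y = -(ρ • z) := ⟨-(ρ⁻¹ • y), by simp [smul_smul, hρ.ne']⟩
  rw [show -(ρ⁻¹ • -(ρ • z)) = z by simp [smul_smul, hρ.ne']]
  obtain ⟨p, hp⟩ := exists_isProx hgp hglsc hgc (inv_pos.2 hρ) z
  obtain ⟨gp, hgpv⟩ : ∃ gp : ℝ, g p = gp :=
    ⟨(g p).toReal, (EReal.coe_toReal (hp.ne_top hgp) (hgp.2 p)).symm⟩
  have hA := econj_rfun_eq_of_isProx (fun x => econj_ne_bot hgp (-x)) hρ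
    (hp.isProx_econj_neg hgc hgp.2 hρ hgpv) (hp.econj_neg_smul_sub_eq hgc hgp.2 hgpv)
  have hB := econj_rfun_eq_of_isProx hgp.2 (inv_pos.2 hρ) hp hgpv
  rw [p2fun, p2fun, hA, hB, show (2 : EReal) = (2 : ℝ) from rfl]
  simp only [← EReal.coe_mul, ← EReal.coe_sub, ← EReal.coe_neg, EReal.coe_eq_coe_iff]
  rw [sub_neg_eq_add, ← smul_add, sub_add_cancel]
  simp only [norm_neg, norm_smul, Real.norm_eq_abs, abs_of_pos hρ, real_inner_smul_left,
    inner_sub_left, real_inner_self_eq_norm_sq, norm_sub_sq_real, real_inner_comm p z]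
  field_simp
  ring
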